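/- arXiv:1003.5248 — 2 statements merged into one kernel-verified Lean document; each statement's English description precedes it below -/
import Mathlib

section
/- Let 0 < λ < N, let B = {x ∈ ℝ^N : |x−a| < r} be an open ball, and let Θ_B be the associated inversion operator with parameter λ. Then for every f ∈ L^{2N/(2N−λ)}(ℝ^N) one has I_λ[Θ_B f] = I_λ[f], i.e. ∬ conj((Θ_B f)(x)) (Θ_B f)(y) |x−y|^{−λ} dx dy = ∬ conj(f(x)) f(y) |x−y|^{−λ} dx dy. -/
/-!
Inversion `ι` in the sphere `∂B` is an involution of `ℝ^N ∖ {a}` with Jacobian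
`(r/|x-a|)^{2N}` which stretches distances by `|ι x - ι y| = (r/|x-a|)(r/|y-a|)|x-y|`.
Changing variables by `ι` in both integrals of `I_λ[Θ_B f]`, the two Jacobians, the weights
`(r/|x-a|)^{-(2N-λ)}` of `Θ_B f` at `ι x` and the stretched kernel cancel exactly: in each
variable the exponents add up to `2N - (2N-λ) - λ = 0`.
-/

open MeasureTheory ENNReal

/-- The functional `I_λ[f,g] = ∬ conj(f(x)) g(y) |x-y|^{-λ} dx dy` on `ℝ^N`. -/
noncomputable def Ilam (N : ℕ) (lam : ℝ)
    (f g : EuclideanSpace ℝ (Fin N) → ℂ) : ℂ :=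
  ∫ x, ∫ y, (starRingEnd ℂ) (f x) * g y * (((‖x - y‖ : ℝ) ^ (-lam) : ℝ) : ℂ)

/-- The inversion operator `Θ_B` associated with the ball `B = {|x-a| < r}`:
`(Θ_B f)(x) = (r/|x-a|)^{2N-λ} f(r²(x-a)/|x-a|² + a)`. -/
noncomputable def invOp (N : ℕ) (lam : ℝ) (a : EuclideanSpace ℝ (Fin N)) (r : ℝ)
    (f : EuclideanSpace ℝ (Fin N) → ℂ) : EuclideanSpace ℝ (Fin N) → ℂ :=
  fun x => (((r / ‖x - a‖ : ℝ) ^ (2 * (N : ℝ) - lam) : ℝ) : ℂ) *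
    f ((r ^ 2 / ‖x - a‖ ^ 2) • (x - a) + a)

open EuclideanGeometry Module

section Inversion

variable {F : Type*} [NormedAddCommGroup F] [InnerProductSpace ℝ F] [FiniteDimensional ℝ F]

theorem abs_det_fderiv_inversion {a x : F} (r : ℝ) (hx : x ≠ a) :
    |((r / dist x a) ^ 2 • ((ℝ ∙ (x - a))ᗮ.reflection : F →L[ℝ] F)).det| =
      (r / dist x a) ^ (2 * finrank ℝ F) := by
  rw [ContinuousLinearMap.det, ContinuousLinearMap.toLinearMap_smul, LinearMap.det_smul]
  change |_ * LinearMap.det (ℝ ∙ (x - a))ᗮ.reflection.toLinearMap| = _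
  rw [Submodule.det_reflection, Submodule.orthogonal_orthogonal,
    finrank_span_singleton (sub_ne_zero.2 hx), pow_one, mul_neg_one, abs_neg,
    abs_of_nonneg (by positivity), ← pow_mul]

variable [MeasurableSpace F] [BorelSpace F] [Nontrivial F] (μ : Measure F) [μ.IsAddHaarMeasure]
  {G : Type*} [NormedAddCommGroup G] [NormedSpace ℝ G]

theorem integral_comp_inversion (a : F) {r : ℝ} (hr : r ≠ 0) (g : F → G) :
    ∫ x, g x ∂μ = ∫ x, (r / dist x a) ^ (2 * finrank ℝ F) • g (inversion a r x) ∂μ := by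
  have hs : MeasurableSet ({a}ᶜ : Set F) := (measurableSet_singleton a).compl
  have himage : inversion a r '' {a}ᶜ = {a}ᶜ := by
    rw [(inversion_involutive a hr).image_eq_preimage_symm]
    ext x
    simp [inversion_eq_center hr]
  calc ∫ x, g x ∂μ = ∫ x in inversion a r '' {a}ᶜ, g x ∂μ := by
        rw [himage, restrict_compl_singleton]
    _ = ∫ x in {a}ᶜ, |((r / dist x a) ^ 2 • ((ℝ ∙ (x - a))ᗮ.reflection : F →L[ℝ] F)).det| •
          g (inversion a r x) ∂μ :=
        integral_image_eq_integral_abs_det_fderiv_smul μ hs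
          (fun x hx => (hasFDerivAt_inversion hx).hasFDerivWithinAt)
          (inversion_injective a hr).injOn g
    _ = ∫ x in {a}ᶜ, (r / dist x a) ^ (2 * finrank ℝ F) • g (inversion a r x) ∂μ :=
        setIntegral_congr_fun hs fun x hx => by rw [abs_det_fderiv_inversion r hx]
    _ = _ := by rw [restrict_compl_singleton]

end Inversion

theorem Real.pow_mul_inv_rpow_sub (n : ℕ) {u : ℝ} (hu : 0 < u) (lam : ℝ) :
    u ^ n * u⁻¹ ^ ((n : ℝ) - lam) = u ^ lam := by
  rw [Real.inv_rpow hu.le, ← Real.rpow_neg hu.le, ← Real.rpow_natCast, ← Real.rpow_add hu,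
    neg_sub, add_sub_cancel]

theorem invOp_apply (N : ℕ) (lam : ℝ) (a : EuclideanSpace ℝ (Fin N)) (r : ℝ)
    (f : EuclideanSpace ℝ (Fin N) → ℂ) (x : EuclideanSpace ℝ (Fin N)) :
    invOp N lam a r f x =
      (((r / dist x a) ^ (2 * (N : ℝ) - lam) : ℝ) : ℂ) * f (inversion a r x) := by
  simp only [invOp, inversion_def, vsub_eq_sub, vadd_eq_add, dist_eq_norm, div_pow]

theorem invOp_inversion (N : ℕ) (lam : ℝ) (a : EuclideanSpace ℝ (Fin N)) {r : ℝ} (hr : r ≠ 0)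
    (f : EuclideanSpace ℝ (Fin N) → ℂ) (x : EuclideanSpace ℝ (Fin N)) :
    invOp N lam a r f (inversion a r x) =
      (((r / dist x a)⁻¹ ^ (2 * (N : ℝ) - lam) : ℝ) : ℂ) * f x := by
  rw [invOp_apply, inversion_inversion a hr, dist_inversion_center, div_div_eq_mul_div, inv_div,
    pow_two, mul_div_mul_left _ _ hr]

theorem invOp_kernel_inversion (N : ℕ) (lam : ℝ) (a : EuclideanSpace ℝ (Fin N)) {r : ℝ}
    (hr : 0 < r) (f : EuclideanSpace ℝ (Fin N) → ℂ) {x y : EuclideanSpace ℝ (Fin N)}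
    (hx : x ≠ a) (hy : y ≠ a) :
    (r / dist x a) ^ (2 * N) • (r / dist y a) ^ (2 * N) •
      ((starRingEnd ℂ) (invOp N lam a r f (inversion a r x)) *
        invOp N lam a r f (inversion a r y) *
        (((‖inversion a r x - inversion a r y‖ : ℝ) ^ (-lam) : ℝ) : ℂ)) =
      (starRingEnd ℂ) (f x) * f y * (((‖x - y‖ : ℝ) ^ (-lam) : ℝ) : ℂ) := by
  set u := r / dist x a
  set v := r / dist y a
  have hu : 0 < u := div_pos hr (dist_pos.2 hx)
  have hv : 0 < v := div_pos hr (dist_pos.2 hy)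
  have hdist : ‖inversion a r x - inversion a r y‖ = u * v * ‖x - y‖ := by
    rw [← dist_eq_norm, ← dist_eq_norm, dist_inversion_inversion hx hy, div_mul_div_comm, sq]
  have hweight : u ^ (2 * N) * v ^ (2 * N) *
      (u⁻¹ ^ (2 * (N : ℝ) - lam) * v⁻¹ ^ (2 * (N : ℝ) - lam) * (u * v * ‖x - y‖) ^ (-lam)) =
      ‖x - y‖ ^ (-lam) := by
    have hu_cancel := Real.pow_mul_inv_rpow_sub (2 * N) hu lam
    have hv_cancel := Real.pow_mul_inv_rpow_sub (2 * N) hv lam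
    push_cast at hu_cancel hv_cancel
    rw [Real.mul_rpow (by positivity) (norm_nonneg _), Real.mul_rpow hu.le hv.le,
      Real.rpow_neg hu.le, Real.rpow_neg hv.le]
    calc _ = (u ^ (2 * N) * u⁻¹ ^ (2 * (N : ℝ) - lam)) * (v ^ (2 * N) * v⁻¹ ^ (2 * (N : ℝ) - lam))
          * ((u ^ lam)⁻¹ * (v ^ lam)⁻¹ * ‖x - y‖ ^ (-lam)) := by ring
      _ = _ := by
        rw [hu_cancel, hv_cancel]
        field_simp
  rw [invOp_inversion N lam a hr.ne', invOp_inversion N lam a hr.ne', hdist, ← hweight]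
  simp only [Complex.real_smul, map_mul, Complex.conj_ofReal]
  push_cast
  ring

theorem conformal_invariance_inversion_general (N : ℕ) (hN : 1 ≤ N) (lam : ℝ)
    (a : EuclideanSpace ℝ (Fin N)) (r : ℝ) (hr : 0 < r)
    (f : EuclideanSpace ℝ (Fin N) → ℂ) :
    Ilam N lam (invOp N lam a r f) (invOp N lam a r f) = Ilam N lam f f := by
  have : Nonempty (Fin N) := Fin.pos_iff_nonempty.1 hN
  have hcov :=
    integral_comp_inversion (G := ℂ) (volume : Measure (EuclideanSpace ℝ (Fin N))) a hr.ne'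
  rw [finrank_euclideanSpace_fin] at hcov
  unfold Ilam
  rw [hcov]
  refine integral_congr_ae ?_
  filter_upwards [Measure.ae_ne volume a] with x hx
  rw [hcov, ← integral_smul]
  refine integral_congr_ae ?_
  filter_upwards [Measure.ae_ne volume a] with y hy
  exact invOp_kernel_inversion N lam a hr f hx hy

/-- Conformal invariance of `I_λ` under inversion in a sphere:
`I_λ[Θ_B f] = I_λ[f]` for every `f ∈ L^{2N/(2N-λ)}`. -/
theorem conformal_invariance_inversion (N : ℕ) (hN : 1 ≤ N) (lam : ℝ)
    (hlam0 : 0 < lam) (hlamN : lam < N)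
    (a : EuclideanSpace ℝ (Fin N)) (r : ℝ) (hr : 0 < r)
    (f : EuclideanSpace ℝ (Fin N) → ℂ)
    (hf : MemLp f (ENNReal.ofReal (2 * N / (2 * N - lam))) volume) :
    Ilam N lam (invOp N lam a r f) (invOp N lam a r f) = Ilam N lam f f :=
  conformal_invariance_inversion_general N hN lam a r hr f
end

section
/- Let f ∈ L^1(ℝ) be supported in [0, ∞) with ∫_0^∞ f(x) dx = 0 (and with ∬ |f(x)||f(y)| |log(x+y)| dx dy < ∞). Then ∫_0^∞ ∫_0^∞ conj(f(x)) log(1/(x+y)) f(y) dx dy = ∫_0^∞ τ^{−1} | ∫_0^∞ e^{−τx} f(x) dx |² dτ. In particular the left-hand side is real and non-negative, and it is strictly positive unless f = 0 a.e. -/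
/-!
Frullani's integral gives `log (1 / c) = ∫₀^∞ τ⁻¹ (e^{-cτ} - e^{-τ}) dτ` for `c > 0`, and the
absolute value of this kernel integrates to `|log c|`, so the `log`-integrability hypothesis
makes the triple integral over `(x, y, τ)` absolutely convergent. Integrating first in `(x, y)`
instead, the kernel at `c = x + y` factors and the inner integral becomes
`τ⁻¹ (|Lf(τ)|² - e^{-τ} |∫ f|²)`, whose second term vanishes since `∫ f = 0`.

If the right-hand side vanishes, the continuous function `Lf` vanishes on `(0, ∞)`; together
with `∫ f = 0` this says that `f` integrates to zero against every polynomial in `e^{-x}`, hence,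
by Weierstrass, against every `φ (e^{-x})` with `φ` continuous on `[0, 1]`. Every smooth test
function supported in `(0, ∞)` is of this form, so `f = 0` a.e.
-/

open MeasureTheory Set Filter
open scoped Polynomial ComplexConjugate

noncomputable section

def frullaniKernel (a b τ : ℝ) : ℝ := τ⁻¹ * (Real.exp (-(a * τ)) - Real.exp (-(b * τ)))

lemma frullaniKernel_swap (a b : ℝ) : frullaniKernel b a = -frullaniKernel a b := by
  ext τ; simp only [frullaniKernel, Pi.neg_apply]; ring

lemma measurable_frullaniKernel (a b : ℝ) : Measurable (frullaniKernel a b) := by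
  unfold frullaniKernel; fun_prop

lemma frullaniKernel_nonneg {a b τ : ℝ} (hab : a ≤ b) (hτ : 0 ≤ τ) : 0 ≤ frullaniKernel a b τ :=
  mul_nonneg (inv_nonneg.2 hτ) (sub_nonneg.2 (Real.exp_le_exp.2 (by nlinarith)))

lemma frullaniKernel_le (a b : ℝ) {τ : ℝ} (hτ : 0 < τ) :
    frullaniKernel a b τ ≤ (b - a) * Real.exp (-(a * τ)) := by
  have hsplit : Real.exp (-(b * τ)) = Real.exp (-(a * τ)) * Real.exp (-((b - a) * τ)) := by
    rw [← Real.exp_add]; ring_nf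
  have hlin : 1 - (b - a) * τ ≤ Real.exp (-((b - a) * τ)) := by
    linarith [Real.add_one_le_exp (-((b - a) * τ))]
  rw [frullaniKernel, hsplit, inv_mul_le_iff₀ hτ]
  nlinarith [Real.exp_pos (-(a * τ))]

lemma integrableOn_frullaniKernel {a b : ℝ} (ha : 0 < a) (hb : 0 < b) :
    IntegrableOn (frullaniKernel a b) (Ioi 0) := by
  wlog hab : a ≤ b generalizing a b
  · have := (this hb ha (le_of_not_ge hab)).neg
    rwa [← frullaniKernel_swap] at this
  refine Integrable.mono' ((exp_neg_integrableOn_Ioi 0 ha).const_mul (b - a))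
    (measurable_frullaniKernel a b).aestronglyMeasurable ?_
  filter_upwards [ae_restrict_mem measurableSet_Ioi] with τ (hτ : 0 < τ)
  rw [Real.norm_of_nonneg (frullaniKernel_nonneg hab hτ.le)]
  simpa only [neg_mul] using frullaniKernel_le a b hτ

lemma integral_frullaniKernel {a b : ℝ} (ha : 0 < a) (hb : 0 < b) :
    ∫ τ in Ioi 0, frullaniKernel a b τ = Real.log (b / a) := by
  have hcont : Continuous fun t : ℝ => Real.exp (-t) := by fun_prop
  have h := Frullani.integral_Ioi_eq (L := 1) (R := 0)
    (hcont.locallyIntegrable.locallyIntegrableOn _) ha hb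
    (by simpa using (hcont.tendsto 0).mono_left nhdsWithin_le_nhds)
    Real.tendsto_exp_neg_atTop_nhds_zero (integrableOn_frullaniKernel ha hb)
  simpa [frullaniKernel] using h

lemma integral_abs_frullaniKernel {a b : ℝ} (ha : 0 < a) (hb : 0 < b) :
    ∫ τ in Ioi 0, |frullaniKernel a b τ| = |Real.log (b / a)| := by
  wlog hab : a ≤ b generalizing a b
  · rw [frullaniKernel_swap b a, ← inv_div, Real.log_inv, abs_neg]
    simpa only [Pi.neg_apply, abs_neg] using this hb ha (le_of_not_ge hab)
  rw [setIntegral_congr_fun measurableSet_Ioi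
    fun τ (hτ : 0 < τ) => abs_of_nonneg (frullaniKernel_nonneg hab hτ.le),
    integral_frullaniKernel ha hb, abs_of_nonneg (Real.log_nonneg ((one_le_div ha).2 hab))]

def laplaceTransform (f : ℝ → ℂ) (τ : ℝ) : ℂ :=
  ∫ x in Ioi 0, ((Real.exp (-(τ * x)) : ℝ) : ℂ) * f x

lemma exp_neg_mem_Icc {x : ℝ} (hx : 0 ≤ x) : Real.exp (-x) ∈ Icc 0 1 :=
  ⟨(Real.exp_pos _).le, Real.exp_le_one_iff.2 (by linarith)⟩

lemma norm_exp_neg_mul_le_one {τ x : ℝ} (hτ : 0 ≤ τ) (hx : 0 ≤ x) :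
    ‖((Real.exp (-(τ * x)) : ℝ) : ℂ)‖ ≤ 1 := by
  rw [Complex.norm_real, Real.norm_of_nonneg (Real.exp_pos _).le, Real.exp_le_one_iff]
  nlinarith

section Laplace

variable {f : ℝ → ℂ}

lemma integrableOn_exp_neg_mul {τ : ℝ} (hτ : 0 ≤ τ) (hf : IntegrableOn f (Ioi 0)) :
    IntegrableOn (fun x => ((Real.exp (-(τ * x)) : ℝ) : ℂ) * f x) (Ioi 0) :=
  hf.bdd_mul (by fun_prop) <| by
    filter_upwards [ae_restrict_mem measurableSet_Ioi] with x (hx : 0 < x)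
    exact norm_exp_neg_mul_le_one hτ hx.le

lemma continuousOn_laplaceTransform (hf : IntegrableOn f (Ioi 0)) :
    ContinuousOn (laplaceTransform f) (Ici 0) := by
  refine continuousOn_of_dominated (bound := fun x => ‖f x‖)
    (fun τ (hτ : 0 ≤ τ) => (integrableOn_exp_neg_mul hτ hf).aestronglyMeasurable)
    (fun τ (hτ : 0 ≤ τ) => ?_) hf.norm (ae_of_all _ fun x => by fun_prop)
  filter_upwards [ae_restrict_mem measurableSet_Ioi] with x (hx : 0 < x)
  rw [norm_mul]
  exact mul_le_of_le_one_left (norm_nonneg _) (norm_exp_neg_mul_le_one hτ hx.le)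

lemma integral_eval_exp_neg_mul_eq_zero (hf : IntegrableOn f (Ioi 0))
    (h : ∀ n : ℕ, laplaceTransform f n = 0) (p : ℝ[X]) :
    ∫ x in Ioi 0, ((p.eval (Real.exp (-x)) : ℝ) : ℂ) * f x = 0 := by
  have hexpand : ∀ x : ℝ, ((p.eval (Real.exp (-x)) : ℝ) : ℂ) * f x =
      ∑ i ∈ Finset.range (p.natDegree + 1),
        (p.coeff i : ℂ) * (((Real.exp (-((i : ℝ) * x)) : ℝ) : ℂ) * f x) := by
    intro x
    rw [Polynomial.eval_eq_sum_range, Complex.ofReal_sum, Finset.sum_mul]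
    refine Finset.sum_congr rfl fun i _ => ?_
    rw [← Real.exp_nat_mul, mul_neg]
    push_cast
    ring
  simp_rw [hexpand]
  rw [integral_finsetSum _ fun i _ =>
    (integrableOn_exp_neg_mul (Nat.cast_nonneg i) hf).const_mul _]
  refine Finset.sum_eq_zero fun i _ => ?_
  rw [integral_const_mul, ← laplaceTransform, h i, mul_zero]

lemma integrableOn_comp_exp_neg_mul (hf : IntegrableOn f (Ioi 0)) {φ : ℝ → ℝ}
    (hφ : ContinuousOn φ (Icc 0 1)) :
    IntegrableOn (fun x => ((φ (Real.exp (-x)) : ℝ) : ℂ) * f x) (Ioi 0) := by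
  have hmaps : MapsTo (fun x : ℝ => Real.exp (-x)) (Ioi 0) (Icc 0 1) := fun x (hx : 0 < x) =>
    exp_neg_mem_Icc hx.le
  obtain ⟨C, hC⟩ := isCompact_Icc.exists_bound_of_continuousOn hφ
  refine hf.bdd_mul (c := C) ((Complex.continuous_ofReal.comp_continuousOn
    (hφ.comp (by fun_prop) hmaps)).aestronglyMeasurable measurableSet_Ioi) ?_
  filter_upwards [ae_restrict_mem measurableSet_Ioi] with x hx
  simpa using hC _ (hmaps hx)

lemma integral_comp_exp_neg_mul_eq_zero (hf : IntegrableOn f (Ioi 0))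
    (h : ∀ n : ℕ, laplaceTransform f n = 0) {φ : ℝ → ℝ} (hφ : ContinuousOn φ (Icc 0 1)) :
    ∫ x in Ioi 0, ((φ (Real.exp (-x)) : ℝ) : ℂ) * f x = 0 := by
  refine norm_le_zero_iff.1 (le_of_forall_pos_le_add fun ε hε => ?_)
  set M := ∫ x in Ioi 0, ‖f x‖
  have hM : 0 ≤ M := setIntegral_nonneg measurableSet_Ioi fun x _ => norm_nonneg _
  obtain ⟨p, hp⟩ := exists_polynomial_near_of_continuousOn 0 1 φ hφ (ε / (M + 1)) (by positivity)
  calc ‖∫ x in Ioi 0, ((φ (Real.exp (-x)) : ℝ) : ℂ) * f x‖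
      = ‖∫ x in Ioi 0, ((φ (Real.exp (-x)) - p.eval (Real.exp (-x)) : ℝ) : ℂ) * f x‖ := by
        simp_rw [Complex.ofReal_sub, sub_mul]
        rw [integral_sub (integrableOn_comp_exp_neg_mul hf hφ)
          (integrableOn_comp_exp_neg_mul hf p.continuous.continuousOn),
          integral_eval_exp_neg_mul_eq_zero hf h, sub_zero]
    _ ≤ ∫ x in Ioi 0, ε / (M + 1) * ‖f x‖ := by
        refine norm_integral_le_of_norm_le (hf.norm.const_mul _) ?_
        filter_upwards [ae_restrict_mem measurableSet_Ioi] with x (hx : 0 < x)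
        rw [norm_mul, Complex.norm_real, Real.norm_eq_abs, abs_sub_comm]
        exact mul_le_mul_of_nonneg_right (hp _ (exp_neg_mem_Icc hx.le)).le (norm_nonneg _)
    _ = ε / (M + 1) * M := integral_const_mul _ _
    _ ≤ 0 + ε := by
        rw [zero_add, div_mul_eq_mul_div, div_le_iff₀ (by positivity)]
        nlinarith

lemma continuous_comp_neg_log {g : ℝ → ℝ} (hg : Continuous g) (hgc : HasCompactSupport g)
    (hg0 : g 0 = 0) : Continuous fun v => g (-Real.log v) := by
  refine continuous_iff_continuousAt.2 fun v => ?_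
  rcases ne_or_eq v 0 with hv | rfl
  · exact hg.continuousAt.comp (Real.continuousAt_log hv).neg
  -- the junk value `Real.log 0 = 0` makes the value at `0` equal to `g 0`
  rw [← continuousWithinAt_compl_self, ContinuousWithinAt, Real.log_zero, neg_zero, hg0]
  obtain ⟨R, hR⟩ := hgc.isCompact.bddAbove
  have hvanish : ∀ᶠ t in atTop, g t = 0 := by
    filter_upwards [eventually_gt_atTop R] with t ht
    exact image_eq_zero_of_notMem_tsupport fun hmem => (hR hmem).not_gt ht
  exact tendsto_const_nhds.congr' <|
    ((tendsto_neg_atBot_atTop.comp Real.tendsto_log_nhdsNE_zero).eventually hvanish).mono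
      fun v hv => hv.symm

lemma ae_eq_zero_of_laplaceTransform_natCast_eq_zero (hf : IntegrableOn f (Ioi 0))
    (h : ∀ n : ℕ, laplaceTransform f n = 0) : ∀ᵐ x, x ∈ Ioi 0 → f x = 0 := by
  refine isOpen_Ioi.ae_eq_zero_of_integral_contDiff_smul_eq_zero
    hf.locallyIntegrableOn fun g hg hgc hgU => ?_
  have hg0 : ∀ x ∉ Ioi (0 : ℝ), g x = 0 := fun x hx =>
    image_eq_zero_of_notMem_tsupport fun hmem => hx (hgU hmem)
  rw [← setIntegral_eq_integral_of_forall_compl_eq_zero fun x hx => by rw [hg0 x hx, zero_smul]]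
  have hφ := continuous_comp_neg_log hg.continuous hgc (hg0 0 (lt_irrefl (0 : ℝ)))
  convert integral_comp_exp_neg_mul_eq_zero hf h hφ.continuousOn using 3 with x
  rw [Real.log_exp, neg_neg, Complex.real_smul]

end Laplace

lemma MeasureTheory.Integrable.conj {α : Type*} [MeasurableSpace α] {μ : Measure α} {u : α → ℂ}
    (hu : Integrable u μ) : Integrable (fun x => conj (u x)) μ :=
  Complex.conjLIE.integrable_comp_iff.2 hu

lemma integral_prod_conj_mul {α : Type*} [MeasurableSpace α] {μ : Measure α} [SFinite μ]
    (u : α → ℂ) : ∫ p, conj (u p.1) * u p.2 ∂μ.prod μ = ((‖∫ x, u x ∂μ‖ ^ 2 : ℝ) : ℂ) := by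
  rw [integral_prod_mul (fun x => conj (u x)) u, integral_conj, Complex.conj_mul',
    Complex.ofReal_pow]

local notation "μ₊" => Measure.restrict (volume : Measure ℝ) (Ioi (0 : ℝ))

section LogEnergy

variable {f : ℝ → ℂ}

lemma ae_fst_pos_and_snd_pos : ∀ᵐ p ∂(μ₊.prod μ₊), 0 < p.1 ∧ 0 < p.2 := by
  rw [Measure.prod_restrict]
  exact ae_restrict_mem (measurableSet_Ioi.prod measurableSet_Ioi)

lemma integrable_frullaniKernel_triple (hf : IntegrableOn f (Ioi 0))
    (hlog : IntegrableOn (fun p : ℝ × ℝ => ‖f p.1‖ * ‖f p.2‖ * |Real.log (p.1 + p.2)|)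
      (Ioi 0 ×ˢ Ioi 0)) :
    Integrable (fun q : (ℝ × ℝ) × ℝ =>
      conj (f q.1.1) * f q.1.2 * (frullaniKernel (q.1.1 + q.1.2) 1 q.2 : ℂ))
      ((μ₊.prod μ₊).prod μ₊) := by
  have hfm := hf.aestronglyMeasurable
  refine (integrable_prod_iff ?_).2 ⟨?_, ?_⟩
  · refine ((hfm.comp_fst.comp_fst.star).mul hfm.comp_snd.comp_fst).mul ?_
    exact (Complex.measurable_ofReal.comp (by unfold frullaniKernel; fun_prop)).aestronglyMeasurable
  · filter_upwards [ae_fst_pos_and_snd_pos] with p hp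
    exact ((integrableOn_frullaniKernel (add_pos hp.1 hp.2) one_pos).ofReal).const_mul _
  · have hlog' : Integrable (fun p : ℝ × ℝ => ‖f p.1‖ * ‖f p.2‖ * |Real.log (p.1 + p.2)|)
        (μ₊.prod μ₊) := by
      rwa [Measure.prod_restrict, ← Measure.volume_eq_prod]
    refine hlog'.congr ?_
    filter_upwards [ae_fst_pos_and_snd_pos] with p hp
    simp only [norm_mul, Complex.norm_conj, Complex.norm_real, Real.norm_eq_abs]
    rw [integral_const_mul, integral_abs_frullaniKernel (add_pos hp.1 hp.2) one_pos, one_div,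
      Real.log_inv, abs_neg]

lemma conj_mul_mul_frullaniKernel (a b : ℂ) (x y τ : ℝ) :
    conj a * b * (frullaniKernel (x + y) 1 τ : ℂ) =
      (τ⁻¹ : ℂ) * (conj ((Real.exp (-(τ * x)) : ℂ) * a) * ((Real.exp (-(τ * y)) : ℂ) * b)) -
        ((τ⁻¹ * Real.exp (-τ) : ℝ) : ℂ) * (conj a * b) := by
  have hsplit : Real.exp (-((x + y) * τ)) = Real.exp (-(τ * x)) * Real.exp (-(τ * y)) := by
    rw [← Real.exp_add]; ring_nf
  simp only [frullaniKernel, hsplit, one_mul, map_mul, Complex.conj_ofReal]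
  push_cast
  ring

lemma ae_integral_frullaniKernel_eq_log :
    ∀ᵐ p ∂(μ₊.prod μ₊),
      ∫ τ in Ioi 0, conj (f p.1) * f p.2 * (frullaniKernel (p.1 + p.2) 1 τ : ℂ) =
        conj (f p.1) * ((Real.log (1 / (p.1 + p.2)) : ℝ) : ℂ) * f p.2 := by
  filter_upwards [ae_fst_pos_and_snd_pos] with p hp
  rw [integral_const_mul, integral_complex_ofReal,
    integral_frullaniKernel (add_pos hp.1 hp.2) one_pos]
  ring

lemma ae_integral_prod_frullaniKernel_eq (hf : IntegrableOn f (Ioi 0))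
    (hzero : ∫ x in Ioi 0, f x = 0) :
    ∀ᵐ τ ∂μ₊, ∫ p, conj (f p.1) * f p.2 * (frullaniKernel (p.1 + p.2) 1 τ : ℂ) ∂(μ₊.prod μ₊) =
      ((τ⁻¹ * ‖laplaceTransform f τ‖ ^ 2 : ℝ) : ℂ) := by
  filter_upwards [ae_restrict_mem measurableSet_Ioi] with τ (hτ : 0 < τ)
  have hu := integrableOn_exp_neg_mul hτ.le hf
  simp_rw [conj_mul_mul_frullaniKernel]
  rw [integral_sub (hu.conj.mul_prod hu |>.const_mul _)
      (hf.conj.mul_prod hf |>.const_mul _),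
    integral_const_mul, integral_const_mul, integral_prod_conj_mul f,
    integral_prod_conj_mul (fun x => (Real.exp (-(τ * x)) : ℂ) * f x), hzero]
  simp [laplaceTransform]

variable (hf : IntegrableOn f (Ioi 0)) (hzero : ∫ x in Ioi 0, f x = 0)
  (hlog : IntegrableOn (fun p : ℝ × ℝ => ‖f p.1‖ * ‖f p.2‖ * |Real.log (p.1 + p.2)|)
    (Ioi 0 ×ˢ Ioi 0))
include hf hzero hlog

lemma integrableOn_inv_mul_sq_norm_laplaceTransform :
    IntegrableOn (fun τ => τ⁻¹ * ‖laplaceTransform f τ‖ ^ 2) (Ioi 0) := by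
  have h := (integrable_frullaniKernel_triple hf hlog).integral_prod_right.congr
    (ae_integral_prod_frullaniKernel_eq hf hzero)
  have h' := h.re
  simp only [RCLike.re_to_complex, Complex.ofReal_re] at h'
  exact h'

lemma integral_log_eq_integral_laplaceTransform :
    ∫ x in Ioi 0, ∫ y in Ioi 0, conj (f x) * ((Real.log (1 / (x + y)) : ℝ) : ℂ) * f y =
      ((∫ τ in Ioi 0, τ⁻¹ * ‖laplaceTransform f τ‖ ^ 2 : ℝ) : ℂ) := by
  have H := integrable_frullaniKernel_triple hf hlog
  calc ∫ x in Ioi 0, ∫ y in Ioi 0, conj (f x) * ((Real.log (1 / (x + y)) : ℝ) : ℂ) * f y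
      = ∫ p, (∫ τ in Ioi 0, conj (f p.1) * f p.2 * (frullaniKernel (p.1 + p.2) 1 τ : ℂ))
          ∂(μ₊.prod μ₊) := by
        rw [integral_congr_ae ae_integral_frullaniKernel_eq_log]
        exact (integral_prod _ (H.integral_prod_left.congr ae_integral_frullaniKernel_eq_log)).symm
    _ = ∫ τ in Ioi 0, ∫ p, conj (f p.1) * f p.2 * (frullaniKernel (p.1 + p.2) 1 τ : ℂ)
          ∂(μ₊.prod μ₊) := integral_integral_swap H
    _ = ((∫ τ in Ioi 0, τ⁻¹ * ‖laplaceTransform f τ‖ ^ 2 : ℝ) : ℂ) := by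
        rw [integral_congr_ae (ae_integral_prod_frullaniKernel_eq hf hzero),
          integral_complex_ofReal]

end LogEnergy

lemma eqOn_zero_of_integral_inv_mul_sq_norm_laplaceTransform_eq_zero {f : ℝ → ℂ}
    (hf : IntegrableOn f (Ioi 0))
    (hint : IntegrableOn (fun τ => τ⁻¹ * ‖laplaceTransform f τ‖ ^ 2) (Ioi 0))
    (h0 : ∫ τ in Ioi 0, τ⁻¹ * ‖laplaceTransform f τ‖ ^ 2 = 0) :
    EqOn (laplaceTransform f) 0 (Ioi 0) := by
  have hae := (integral_eq_zero_iff_of_nonneg_ae (by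
    filter_upwards [ae_restrict_mem measurableSet_Ioi] with τ (hτ : 0 < τ)
    exact mul_nonneg (inv_nonneg.2 hτ.le) (sq_nonneg _)) hint).1 h0
  refine Measure.eqOn_open_of_ae_eq (μ := volume) ?_ isOpen_Ioi
    ((continuousOn_laplaceTransform hf).mono Ioi_subset_Ici_self) continuousOn_const
  filter_upwards [hae, ae_restrict_mem measurableSet_Ioi] with τ hτ (hpos : 0 < τ)
  simpa [hpos.ne'] using hτ

end

/-- Logarithmic representation formula on the half-line: for `f ∈ L¹(ℝ)` supported in
`[0,∞)` with `∫_0^∞ f = 0` and `∬ |f(x)||f(y)||log(x+y)| dx dy < ∞`,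
`∬ conj(f(x)) log(1/(x+y)) f(y) dx dy = ∫_0^∞ τ⁻¹ |∫_0^∞ e^{-τx} f(x) dx|² dτ`;
in particular the left side is real, non-negative, and strictly positive unless
`f = 0` a.e. -/
theorem halfline_log_representation (f : ℝ → ℂ)
    (hf : Integrable f volume)
    (hsupp : ∀ x : ℝ, x < 0 → f x = 0)
    (hzero : ∫ x in Set.Ioi (0 : ℝ), f x = 0)
    (hlog : IntegrableOn
      (fun p : ℝ × ℝ => ‖f p.1‖ * ‖f p.2‖ * |Real.log (p.1 + p.2)|)
      (Set.Ioi (0 : ℝ) ×ˢ Set.Ioi (0 : ℝ)) volume) :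
    (∫ x in Set.Ioi (0 : ℝ), ∫ y in Set.Ioi (0 : ℝ),
        (starRingEnd ℂ) (f x) * ((Real.log (1 / (x + y)) : ℝ) : ℂ) * f y) =
      ((∫ τ in Set.Ioi (0 : ℝ), τ⁻¹ *
          ‖∫ x in Set.Ioi (0 : ℝ), ((Real.exp (-(τ * x)) : ℝ) : ℂ) * f x‖ ^ 2
        : ℝ) : ℂ) ∧
    0 ≤ ∫ τ in Set.Ioi (0 : ℝ), τ⁻¹ *
          ‖∫ x in Set.Ioi (0 : ℝ), ((Real.exp (-(τ * x)) : ℝ) : ℂ) * f x‖ ^ 2 ∧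
    (¬ (f =ᵐ[(volume : Measure ℝ)] 0) →
      0 < ∫ τ in Set.Ioi (0 : ℝ), τ⁻¹ *
          ‖∫ x in Set.Ioi (0 : ℝ), ((Real.exp (-(τ * x)) : ℝ) : ℂ) * f x‖ ^ 2) := by
  have hfOn : IntegrableOn f (Ioi 0) := hf.integrableOn
  have hnonneg : 0 ≤ ∫ τ in Ioi 0, τ⁻¹ * ‖laplaceTransform f τ‖ ^ 2 :=
    setIntegral_nonneg measurableSet_Ioi fun τ (hτ : 0 < τ) =>
      mul_nonneg (inv_nonneg.2 hτ.le) (sq_nonneg _)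
  refine ⟨integral_log_eq_integral_laplaceTransform hfOn hzero hlog, hnonneg,
    fun hne => hnonneg.lt_of_ne fun h0 => hne ?_⟩
  have hL := eqOn_zero_of_integral_inv_mul_sq_norm_laplaceTransform_eq_zero hfOn
    (integrableOn_inv_mul_sq_norm_laplaceTransform hfOn hzero hlog) h0.symm
  have hpos := ae_eq_zero_of_laplaceTransform_natCast_eq_zero hfOn fun n => by
    rcases n.eq_zero_or_pos with rfl | hn
    · simpa [laplaceTransform] using hzero
    · exact hL (Nat.cast_pos.2 hn : (0 : ℝ) < n)
  filter_upwards [hpos, volume.ae_ne 0] with x hx hx0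
  rcases hx0.lt_or_gt with hneg | hpos
  · exact hsupp x hneg
  · exact hx hpos
end
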